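/- Let J be a directed partially ordered set in which every element has only finitely many predecessors (for each j ∈ J, the set {i ∈ J : i ≤ j} is finite), and let K be a filtered category. Then for every function g assigning to each element j ∈ J an object g(j) of K, there exist a functor F : J ⥤ K (i.e. an order-preserving assignment of objects and compatible connecting morphisms) and, for every j ∈ J, a morphism g(j) ⟶ F(j) in K. -/

import Mathlib

/-!
Since every element has finitely many predecessors, `j ↦ #(Iic j)` is a strictly monotone rank
`r : J → ℕ`. We construct functors on the truncations `{j | r j < n}` by induction on `n`, each
extending the previous one. The elements of rank exactly `n` are pairwise incomparable and all
their strict predecessors have rank `< n`, so to extend to them it suffices to choose, for each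
such `j`, a cocone over the finite diagram strictly below `j` whose vertex also receives a map
from `g j`; filteredness of `K` provides one. The compatible functors then glue to `J ⥤ K`.
-/

open CategoryTheory Limits

universe v u w

namespace Stmt11

abbrev Truncation {J : Type w} (r : J → ℕ) (n : ℕ) : Type w := {j : J // r j < n}

namespace Truncation

section Glue

variable {J : Type w} [PartialOrder J] {r : J → ℕ}

def incl {m n : ℕ} (h : m ≤ n) : Truncation r m ⥤ Truncation r n :=
  Monotone.functor (f := fun j => ⟨j.1, j.2.trans_le h⟩) fun _ _ hij => hij

variable {K : Type u} [Category.{v} K] {Φ : ∀ n, Truncation r n ⥤ K}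
  (hΦ : ∀ n, incl n.le_succ ⋙ Φ (n + 1) = Φ n)

include hΦ in
lemma incl_comp_eq_of_le {m n : ℕ} (h : m ≤ n) : incl h ⋙ Φ n = Φ m := by
  induction n, h using Nat.le_induction with
  | base => rfl
  | succ n _ ih => rw [← ih, ← hΦ n]; rfl

include hΦ in
lemma obj_eq_of_le {m n : ℕ} (h : m ≤ n) (j : Truncation r m) :
    (Φ n).obj ⟨j.1, j.2.trans_le h⟩ = (Φ m).obj j :=
  Functor.congr_obj (incl_comp_eq_of_le hΦ h) j

def glue (hr : Monotone r) : J ⥤ K where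
  obj j := (Φ (r j + 1)).obj ⟨j, lt_add_one _⟩
  map {i j} f :=
    eqToHom (obj_eq_of_le hΦ (Nat.succ_le_succ (hr (leOfHom f))) ⟨i, lt_add_one _⟩).symm ≫
      (Φ (r j + 1)).map (homOfLE (leOfHom f) :
        (⟨i, Nat.lt_succ_of_le (hr (leOfHom f))⟩ : Truncation r (r j + 1)) ⟶
          ⟨j, lt_add_one _⟩)
  map_id j := by simp
  map_comp {i j k} f f' := by
    have h := Functor.congr_hom
      (incl_comp_eq_of_le hΦ (Nat.succ_le_succ (hr (leOfHom f')))).symm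
      (homOfLE (leOfHom f) :
        (⟨i, Nat.lt_succ_of_le (hr (leOfHom f))⟩ : Truncation r (r j + 1)) ⟶
          ⟨j, lt_add_one _⟩)
    simp only [h, Category.assoc, eqToHom_trans_assoc, Functor.comp_map]
    dsimp only [incl, Monotone.functor, Functor.comp_obj]
    simp [← Functor.map_comp]

end Glue

section Extend

variable {J : Type w} [PartialOrder J] {r : J → ℕ} (hr : StrictMono r) {n : ℕ}

include hr in
lemma rank_lt_of_lt {j : Truncation r (n + 1)} {i : J} (h : i < j.1) : r i < n :=
  (hr h).trans_le (Nat.lt_succ_iff.mp j.2)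

include hr in
lemma rank_lt_of_le {i j : J} (hij : i ≤ j) (hj : r j < n) : r i < n :=
  (hr.monotone hij).trans_lt hj

include hr in
lemma eq_of_le_of_not_lt {i j : Truncation r (n + 1)} (hij : i ≤ j) (hi : ¬ r i.1 < n) :
    i = j :=
  hij.eq_or_lt.resolve_right fun h => hi (rank_lt_of_lt hr h)

def predecessors (j : Truncation r (n + 1)) : {i // i < j.1} ⥤ Truncation r n :=
  Monotone.functor (f := fun i => ⟨i.1, rank_lt_of_lt hr i.2⟩) fun _ _ h => h

variable {K : Type u} [Category.{v} K] (G : Truncation r n ⥤ K)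
  (c : ∀ j : Truncation r (n + 1), ¬ r j.1 < n → Cocone (predecessors hr j ⋙ G))

def extendObj (j : Truncation r (n + 1)) : K :=
  if h : r j.1 < n then G.obj ⟨j.1, h⟩ else (c j h).pt

lemma extendObj_of_lt {j : Truncation r (n + 1)} (h : r j.1 < n) :
    extendObj hr G c j = G.obj ⟨j.1, h⟩ :=
  dif_pos h

lemma extendObj_of_not_lt {j : Truncation r (n + 1)} (h : ¬ r j.1 < n) :
    extendObj hr G c j = (c j h).pt :=
  dif_neg h

def extendMap {i j : Truncation r (n + 1)} (hij : i ≤ j) :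
    extendObj hr G c i ⟶ extendObj hr G c j :=
  if hj : r j.1 < n then
    eqToHom (extendObj_of_lt hr G c (rank_lt_of_le hr hij hj)) ≫
      G.map (homOfLE hij : (⟨i.1, _⟩ : Truncation r n) ⟶ ⟨j.1, hj⟩) ≫
      eqToHom (extendObj_of_lt hr G c hj).symm
  else if hi : r i.1 < n then
    eqToHom (extendObj_of_lt hr G c hi) ≫
      (c j hj).ι.app ⟨i.1, lt_of_le_of_ne hij fun h => hj (h ▸ hi)⟩ ≫
      eqToHom (extendObj_of_not_lt hr G c hj).symm
  else eqToHom (congrArg _ (eq_of_le_of_not_lt hr hij hi))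

lemma extendMap_of_lt {i j : Truncation r (n + 1)} (hij : i ≤ j) (hj : r j.1 < n) :
    extendMap hr G c hij =
      eqToHom (extendObj_of_lt hr G c (rank_lt_of_le hr hij hj)) ≫
        G.map (homOfLE hij : (⟨i.1, _⟩ : Truncation r n) ⟶ ⟨j.1, hj⟩) ≫
        eqToHom (extendObj_of_lt hr G c hj).symm :=
  dif_pos hj

lemma extendMap_of_lt_of_not_lt {i j : Truncation r (n + 1)} (hij : i ≤ j) (hi : r i.1 < n)
    (hj : ¬ r j.1 < n) :
    extendMap hr G c hij =
      eqToHom (extendObj_of_lt hr G c hi) ≫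
        (c j hj).ι.app ⟨i.1, lt_of_le_of_ne hij fun h => hj (h ▸ hi)⟩ ≫
        eqToHom (extendObj_of_not_lt hr G c hj).symm := by
  rw [extendMap, dif_neg hj, dif_pos hi]

lemma extendMap_self_of_not_lt {j : Truncation r (n + 1)} (hj : ¬ r j.1 < n) :
    extendMap hr G c (le_refl j) = 𝟙 _ := by
  rw [extendMap, dif_neg hj, dif_neg hj, eqToHom_refl]

def extend : Truncation r (n + 1) ⥤ K where
  obj := extendObj hr G c
  map f := extendMap hr G c (leOfHom f)
  map_id j := by
    by_cases hj : r j.1 < n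
    · simp [extendMap_of_lt hr G c _ hj]
    · exact extendMap_self_of_not_lt hr G c hj
  map_comp {i j k} f f' := by
    by_cases hk : r k.1 < n
    · simp only [extendMap_of_lt hr G c _ hk,
        extendMap_of_lt hr G c _ (rank_lt_of_le hr (leOfHom f') hk), Category.assoc,
        eqToHom_trans_assoc, eqToHom_refl, Category.id_comp, ← G.map_comp_assoc]
      rfl
    by_cases hj : r j.1 < n
    · have hjk : j.1 < k.1 := lt_of_le_of_ne (leOfHom f') fun h => hk (h ▸ hj)
      have hw : G.map (homOfLE (leOfHom f) : (⟨i.1, _⟩ : Truncation r n) ⟶ ⟨j.1, hj⟩) ≫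
          (c k hk).ι.app ⟨j.1, hjk⟩ = (c k hk).ι.app ⟨i.1, (leOfHom f).trans_lt hjk⟩ :=
        (c k hk).w (homOfLE (leOfHom f) : (⟨i.1, _⟩ : {x // x < k.1}) ⟶ ⟨j.1, hjk⟩)
      simp only [extendMap_of_lt hr G c _ hj, extendMap_of_lt_of_not_lt hr G c _ hj hk,
        extendMap_of_lt_of_not_lt hr G c _ (rank_lt_of_le hr (leOfHom f) hj) hk,
        Category.assoc, eqToHom_trans_assoc, eqToHom_refl, Category.id_comp]
      congr 1
      exact (congrArg (· ≫ eqToHom _) hw.symm).trans (Category.assoc _ _ _)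
    · obtain rfl := eq_of_le_of_not_lt hr (leOfHom f') hj
      simp [extendMap_self_of_not_lt hr G c hj]

lemma incl_comp_extend : incl n.le_succ ⋙ extend hr G c = G := by
  refine CategoryTheory.Functor.ext (fun k => extendObj_of_lt hr G c k.2) fun _ k _ => ?_
  exact extendMap_of_lt hr G c (j := ⟨k.1, _⟩) _ k.2

end Extend

end Truncation

lemma IsFiltered.exists_cocone_with_hom_to_pt {K : Type u} [Category.{v} K] [IsFiltered K]
    {I : Type w} [SmallCategory I] [FinCategory I] (D : I ⥤ K) (X : K) :
    ∃ c : Cocone D, Nonempty (X ⟶ c.pt) :=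
  ⟨(IsFiltered.cocone D).extend (IsFiltered.leftToMax _ X), ⟨IsFiltered.rightToMax _ X⟩⟩

namespace Truncation

variable {J : Type w} [PartialOrder J] {r : J → ℕ} (hr : StrictMono r)
  (hfin : ∀ j : J, (Set.Iio j).Finite) {K : Type u} [Category.{v} K] [IsFiltered K]
  (g : J → K)

include hr hfin in
lemma exists_extension {n : ℕ} (G : Truncation r n ⥤ K)
    (hG : ∀ j, Nonempty (g j.1 ⟶ G.obj j)) :
    ∃ G' : Truncation r (n + 1) ⥤ K,
      incl n.le_succ ⋙ G' = G ∧ ∀ j, Nonempty (g j.1 ⟶ G'.obj j) := by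
  have (j : Truncation r (n + 1)) :
      ∃ c : Cocone (predecessors hr j ⋙ G), Nonempty (g j.1 ⟶ c.pt) := by
    have : Finite {i // i < j.1} := (hfin j.1).to_subtype
    have := Fintype.ofFinite {i // i < j.1}
    exact IsFiltered.exists_cocone_with_hom_to_pt _ _
  choose c hc using this
  refine ⟨extend hr G fun j _ => c j, incl_comp_extend hr G _, fun j => ?_⟩
  dsimp only [extend]
  by_cases h : r j.1 < n
  · rw [extendObj_of_lt hr G _ h]
    exact hG ⟨j.1, h⟩
  · rw [extendObj_of_not_lt hr G _ h]
    exact hc j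

include hr hfin in
lemma exists_compatible_family :
    ∃ Φ : ∀ n, Truncation r n ⥤ K, (∀ n, incl n.le_succ ⋙ Φ (n + 1) = Φ n) ∧
      ∀ n j, Nonempty (g j.1 ⟶ (Φ n).obj j) := by
  choose extension h_incl h_g using
    fun n (G : {G : Truncation r n ⥤ K // ∀ j, Nonempty (g j.1 ⟶ G.obj j)}) =>
      exists_extension hr hfin g G.1 G.2
  let Ψ (n : ℕ) : {G : Truncation r n ⥤ K // ∀ j, Nonempty (g j.1 ⟶ G.obj j)} :=
    Nat.rec
      ⟨(Functor.const _).obj IsFiltered.nonempty.some, fun j => (Nat.not_lt_zero _ j.2).elim⟩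
      (fun n G => ⟨extension n G, h_g n G⟩) n
  exact ⟨fun n => (Ψ n).1, fun n => h_incl n (Ψ n), fun n => (Ψ n).2⟩

end Truncation

lemma strictMono_ncard_Iic {J : Type w} [Preorder J] (hJ : ∀ j : J, (Set.Iic j).Finite) :
    StrictMono fun j : J => (Set.Iic j).ncard :=
  fun _ j h => Set.ncard_lt_ncard (Set.Iic_ssubset_Iic.mpr h) (hJ j)

theorem exists_functor_of_directed_general {J : Type w} [PartialOrder J]
    (hJ : ∀ j : J, {i : J | i ≤ j}.Finite)
    {K : Type u} [Category.{v} K] [IsFiltered K] (g : J → K) :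
    ∃ F : J ⥤ K, ∀ j : J, Nonempty (g j ⟶ F.obj j) := by
  have hr := strictMono_ncard_Iic hJ
  obtain ⟨Φ, hΦ, hg⟩ := Truncation.exists_compatible_family hr
    (fun j => (hJ j).subset Set.Iio_subset_Iic_self) g
  exact ⟨Truncation.glue hΦ hr.monotone, fun j => hg (_ + 1) ⟨j, lt_add_one _⟩⟩

/-- Let `J` be a directed partially ordered set in which every element has only finitely
many predecessors, and let `K` be a filtered category.  Then for every assignment `g` of
an object of `K` to each element of `J`, there exist a functor `F : J ⥤ K` and, for
every `j ∈ J`, a morphism `g j ⟶ F.obj j` in `K`. -/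
theorem exists_functor_of_directed {J : Type w} [PartialOrder J]
    [IsDirected J (· ≤ ·)] (hJ : ∀ j : J, {i : J | i ≤ j}.Finite)
    {K : Type u} [Category.{v} K] [IsFiltered K] (g : J → K) :
    ∃ F : J ⥤ K, ∀ j : J, Nonempty (g j ⟶ F.obj j) :=
  exists_functor_of_directed_general hJ g

end Stmt11
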